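/- For every d ≥ 2 there exists a pair of type I and type II patterns: that is, self-avoiding walks χ^I and χ^II, both contained in the cube [0,3]^d, both visiting every vertex of the boundary of [0,3]^d, both starting at (1,3,1,…,1) and ending at (2,3,1,…,1), and such that the length of χ^II exceeds that of χ^I by two. -/

import Mathlib

open scoped BigOperators

/-- `u` and `v` are nearest neighbours in `ℤ^d` (Euclidean distance one). -/
def IsNeighbor (d : ℕ) (u v : Fin d → ℤ) : Prop :=
  Real.sqrt (∑ j, ((u j : ℝ) - (v j : ℝ)) ^ 2) = 1

/-- `γ : {0,…,n} → ℤ^d` is a walk: consecutive vertices are nearest neighbours. -/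
def IsWalk {d n : ℕ} (γ : Fin (n + 1) → Fin d → ℤ) : Prop :=
  ∀ i : Fin n, IsNeighbor d (γ i.castSucc) (γ i.succ)

/-- A self-avoiding walk: an injective walk. -/
def IsSAW {d n : ℕ} (γ : Fin (n + 1) → Fin d → ℤ) : Prop :=
  IsWalk γ ∧ Function.Injective γ

/-- A walk of length `n` closes if its endpoint neighbours its starting point. -/
def Closes {d n : ℕ} (γ : Fin (n + 1) → Fin d → ℤ) : Prop :=
  IsNeighbor d (γ (Fin.last n)) (γ 0)

/-- The walk number `c_n`: the number of self-avoiding walks of length `n` started at `0`. -/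
noncomputable def cCount (d n : ℕ) : ℕ :=
  Nat.card {γ : Fin (n + 1) → Fin d → ℤ // IsSAW γ ∧ γ 0 = 0}

/-- The probability of the event `E` under the uniform law `W_n` on `SAW_n`. -/
noncomputable def Wprob (d n : ℕ) (E : (Fin (n + 1) → Fin d → ℤ) → Prop) : ℝ :=
  (Nat.card {γ : Fin (n + 1) → Fin d → ℤ // (IsSAW γ ∧ γ 0 = 0) ∧ E γ} : ℝ) /
    (cCount d n : ℝ)

/-- The lexicographical order on `ℤ^d` in which later coordinates are more significant
(in `d = 2`, the second coordinate is compared before the first). -/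
def lexLt (d : ℕ) (u v : Fin d → ℤ) : Prop :=
  ∃ j : Fin d, u j < v j ∧ ∀ k : Fin d, j < k → u k = v k

/-- `x` is the lexicographically maximal (NE) vertex of the image of `γ`. -/
def IsNEAt {d k : ℕ} (γ : Fin k → Fin d → ℤ) (x : Fin d → ℤ) : Prop :=
  (∃ i, γ i = x) ∧ ∀ i, γ i ≠ x → lexLt d (γ i) x

/-- The vertex list of the reversal of `γ` restricted to `[0,j]`, starting at `γ j`. -/
def revList {d n : ℕ} (γ : Fin (n + 1) → Fin d → ℤ) (j : Fin (n + 1)) :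
    List (Fin d → ℤ) :=
  List.ofFn (fun i : Fin (j.1 + 1) => γ ⟨j.1 - i.1, by have h := j.2; omega⟩)

/-- The vertex list of `γ` restricted to `[j,n]`, starting at `γ j`. -/
def fwdList {d n : ℕ} (γ : Fin (n + 1) → Fin d → ℤ) (j : Fin (n + 1)) :
    List (Fin d → ℤ) :=
  List.ofFn (fun i : Fin (n + 1 - j.1) => γ ⟨j.1 + i.1, by have h := i.2; omega⟩)

/-- `φ` is the vertex list of the first part `γ^1` in the two-part decomposition of `γ`:
the two subwalks from the NE vertex, the first part being the lexicographically larger. -/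
def IsFirstPart {d n : ℕ} (γ : Fin (n + 1) → Fin d → ℤ) (φ : List (Fin d → ℤ)) : Prop :=
  ∃ j : Fin (n + 1), IsNEAt γ (γ j) ∧
    ((List.Lex (lexLt d) (fwdList γ j) (revList γ j) ∧ φ = revList γ j) ∨
     (¬ List.Lex (lexLt d) (fwdList γ j) (revList γ j) ∧ φ = fwdList γ j))

/-- The first part `γ^1` of `γ` has walk length `i`. -/
def FirstPartLength {d n : ℕ} (γ : Fin (n + 1) → Fin d → ℤ) (i : ℕ) : Prop :=
  ∃ φ : List (Fin d → ℤ), IsFirstPart γ φ ∧ φ.length = i + 1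

/-- `SAW^0_n`: self-avoiding walks of length `n` whose NE vertex is the origin. -/
def SAW0 (d n : ℕ) (γ : Fin (n + 1) → Fin d → ℤ) : Prop :=
  IsSAW γ ∧ IsNEAt γ (0 : Fin d → ℤ)

/-- Conditional probability `W^0_m(A | B)` under the uniform law on `SAW^0_m`. -/
noncomputable def W0cond (d m : ℕ) (A B : (Fin (m + 1) → Fin d → ℤ) → Prop) : ℝ :=
  (Nat.card {γ : Fin (m + 1) → Fin d → ℤ // SAW0 d m γ ∧ B γ ∧ A γ} : ℝ) /
    (Nat.card {γ : Fin (m + 1) → Fin d → ℤ // SAW0 d m γ ∧ B γ} : ℝ)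

/-- Restriction of a walk to the initial segment `[0,ℓ]` (for `ℓ ≤ m`). -/
def restrictWalk {d m : ℕ} (φ : Fin (m + 1) → Fin d → ℤ) (ℓ : ℕ) :
    Fin (ℓ + 1) → Fin d → ℤ :=
  fun i => φ ⟨min i.1 m, by have h := min_le_right i.1 m; omega⟩

/-- `First_{ℓ,n}`: walks `γ` with `NE(γ) = γ_0 = 0` arising as the first part of some
element of `SAW^0_n`. -/
def FirstSet (d ℓ n : ℕ) (γ : Fin (ℓ + 1) → Fin d → ℤ) : Prop :=
  IsSAW γ ∧ γ 0 = 0 ∧ IsNEAt γ (0 : Fin d → ℤ) ∧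
    ∃ χ : Fin (n + 1) → Fin d → ℤ, SAW0 d n χ ∧ IsFirstPart χ (List.ofFn γ)

/-- `γ` is `(α,n,ℓ)`-charming at index `k`. -/
def Charming (d n ℓ : ℕ) (α : ℝ) (γ : Fin (ℓ + 1) → Fin d → ℤ) (k : ℕ) : Prop :=
  W0cond d (k + (n - ℓ)) (fun χ => Closes χ)
      (fun χ => IsFirstPart χ (List.ofFn (restrictWalk γ k))) > (n : ℝ) ^ (-α)

/-- The set `CS^{α,ℓ,n}_{β,η}` of charming snakes. -/
def CSset (d ℓ n : ℕ) (α β η : ℝ) (γ : Fin (ℓ + 1) → Fin d → ℤ) : Prop :=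
  FirstSet d ℓ n γ ∧
    (n : ℝ) ^ (β - η) / 4 ≤
      (Nat.card {k : ℕ // k ≤ ℓ ∧ (ℓ : ℝ) - (n : ℝ) ^ β ≤ (k : ℝ) ∧ Even (ℓ - k) ∧
        Charming d n ℓ α γ k} : ℝ)

/-- `Φ̂^α_{ℓ,n}`: first parts with high conditional closing probability. -/
def Phat (d ℓ n : ℕ) (α : ℝ) (γ : Fin (ℓ + 1) → Fin d → ℤ) : Prop :=
  FirstSet d ℓ n γ ∧
    W0cond d n (fun χ => Closes χ) (fun χ => IsFirstPart χ (List.ofFn γ)) > (n : ℝ) ^ (-α)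

/-- The coordinate vector `e_{j+1}` of `ℤ^d`. -/
def unitVec (d : ℕ) (j : ℕ) : Fin d → ℤ := fun i => if i.1 = j then 1 else 0

/-- The canonical parametrization of a self-avoiding polygon of length `m` with NE vertex `0`:
a closed walk `φ` with `φ_0 = φ_m = 0`, `φ_1 = -e_1`, injective except `φ_m = φ_0`, and
every other vertex lexicographically below `0`. -/
def IsSAPpath (d m : ℕ) (φ : Fin (m + 1) → Fin d → ℤ) : Prop :=
  IsWalk φ ∧
  (∀ i j : Fin (m + 1), i.1 < m → j.1 < m → φ i = φ j → i = j) ∧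
  φ 0 = 0 ∧ φ (Fin.last m) = 0 ∧ φ 1 = -unitVec d 0 ∧
  (∀ i, φ i ≠ 0 → lexLt d (φ i) (0 : Fin d → ℤ))

/-- The probability of `E` under the uniform law `P_m` on `SAP_m`. -/
noncomputable def Pprob (d m : ℕ) (E : (Fin (m + 1) → Fin d → ℤ) → Prop) : ℝ :=
  (Nat.card {φ : Fin (m + 1) → Fin d → ℤ // IsSAPpath d m φ ∧ E φ} : ℝ) /
    (Nat.card {φ : Fin (m + 1) → Fin d → ℤ // IsSAPpath d m φ} : ℝ)

/-- Cyclic successor on `Fin m`. -/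
def cySucc {m : ℕ} (i : Fin m) : Fin m :=
  ⟨(i.1 + 1) % m, Nat.mod_lt _ (by have h := i.2; omega)⟩

/-- A closing self-avoiding walk of length `m - 1`, recorded on indices `0,…,m-1`. -/
def IsClosingSAW (d m : ℕ) (γ : Fin m → Fin d → ℤ) : Prop :=
  (∀ i : ℕ, (h : i + 1 < m) → IsNeighbor d (γ ⟨i, by omega⟩) (γ ⟨i + 1, h⟩)) ∧
  Function.Injective γ ∧
  ∀ h : 0 < m, IsNeighbor d (γ ⟨m - 1, by omega⟩) (γ ⟨0, h⟩)

/-- The polygon (edge set) of a closing self-avoiding walk: its `m - 1` traversed edges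
together with the missing edge. -/
def polygonOf {d m : ℕ} (γ : Fin m → Fin d → ℤ) : Set (Sym2 (Fin d → ℤ)) :=
  {e | ∃ i : Fin m, e = s(γ i, γ (cySucc i))}

/-- `P` is a self-avoiding polygon of length `m`. -/
def IsPolygon (d m : ℕ) (P : Set (Sym2 (Fin d → ℤ))) : Prop :=
  ∃ γ : Fin m → Fin d → ℤ, IsClosingSAW d m γ ∧ P = polygonOf γ

/-- The polygon number `p_m`: the number of self-avoiding polygons of length `m`
counted up to translation. -/
noncomputable def pCount (d m : ℕ) : ℕ :=
  Nat.card (Quot (fun P Q : {P : Set (Sym2 (Fin d → ℤ)) // IsPolygon d m P} =>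
    ∃ x : Fin d → ℤ, Q.1 = (Sym2.map (fun v => v + x)) '' P.1))

/-- The connective constant `μ = inf_{n ≥ 1} c_n^{1/n}`. -/
noncomputable def mu (d : ℕ) : ℝ :=
  ⨅ n : {k : ℕ // 1 ≤ k}, ((cCount d n.1 : ℝ) ^ ((1 : ℝ) / (n.1 : ℝ)))

/-- Walk condition for a walk of length `m` recorded as a function `ℕ → ℤ^d`. -/
def IsWalkN (d m : ℕ) (f : ℕ → Fin d → ℤ) : Prop :=
  ∀ i, i < m → IsNeighbor d (f i) (f (i + 1))

/-- Self-avoiding walk of length `m` recorded as a function `ℕ → ℤ^d`. -/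
def IsSAWN (d m : ℕ) (f : ℕ → Fin d → ℤ) : Prop :=
  IsWalkN d m f ∧ Set.InjOn f (Set.Iic m)

/-- A vertex of the cube `[0,3]^d`. -/
def InCube {d : ℕ} (v : Fin d → ℤ) : Prop := ∀ j, 0 ≤ v j ∧ v j ≤ 3

/-- A vertex of the boundary of the cube `[0,3]^d`. -/
def OnCubeBoundary {d : ℕ} (v : Fin d → ℤ) : Prop :=
  InCube v ∧ ∃ j, v j = 0 ∨ v j = 3

/-- The vertex `(1,3,1,…,1)`. -/
def patternStart (d : ℕ) : Fin d → ℤ := fun j => if j.1 = 1 then 3 else 1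

/-- The vertex `(2,3,1,…,1)`. -/
def patternEnd (d : ℕ) : Fin d → ℤ :=
  fun j => if j.1 = 1 then 3 else if j.1 = 0 then 2 else 1

/-- `(χI, χII)` (of lengths `a` and `a + 2`, recorded as functions `ℕ → ℤ^d`) is a pair of
type I and type II patterns. -/
def IsPatternPair (d a : ℕ) (χI χII : ℕ → Fin d → ℤ) : Prop :=
  IsSAWN d a χI ∧ IsSAWN d (a + 2) χII ∧
  (∀ i, i ≤ a → InCube (χI i)) ∧ (∀ i, i ≤ a + 2 → InCube (χII i)) ∧
  (∀ v : Fin d → ℤ, OnCubeBoundary v → ∃ i, i ≤ a ∧ χI i = v) ∧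
  (∀ v : Fin d → ℤ, OnCubeBoundary v → ∃ i, i ≤ a + 2 ∧ χII i = v) ∧
  χI 0 = patternStart d ∧ χI a = patternEnd d ∧
  χII 0 = patternStart d ∧ χII (a + 2) = patternEnd d

/-- The pattern `χ` of length `a` occurs at step `k` of the length-`m` walk `f`, with
translation vector `x`. -/
def OccursAt (d a : ℕ) (χ : ℕ → Fin d → ℤ) (m : ℕ) (f : ℕ → Fin d → ℤ)
    (k : ℕ) (x : Fin d → ℤ) : Prop :=
  k + a ≤ m ∧ ∀ i, i ≤ a → f (k + i) = χ i + x

/-- The walk `q` (with its length `q.1`) is obtained from the walk `p` by replacing one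
occurrence of the type I pattern by the type II pattern in the corresponding slot. -/
def SwapIToII (d a : ℕ) (χI χII : ℕ → Fin d → ℤ)
    (p q : ℕ × (ℕ → Fin d → ℤ)) : Prop :=
  q.1 = p.1 + 2 ∧ ∃ k x, OccursAt d a χI p.1 p.2 k x ∧
    (∀ i, i ≤ k → q.2 i = p.2 i) ∧
    (∀ i, i ≤ a + 2 → q.2 (k + i) = χII i + x) ∧
    (∀ i, k + a ≤ i → i ≤ p.1 → q.2 (i + 2) = p.2 i)

/-- Membership in the shell `ς(γ)`: `q` is obtained from `p` by a sequence of swaps of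
type I patterns into type II patterns and vice versa. -/
def InShell (d a : ℕ) (χI χII : ℕ → Fin d → ℤ) :
    (ℕ × (ℕ → Fin d → ℤ)) → (ℕ × (ℕ → Fin d → ℤ)) → Prop :=
  Relation.ReflTransGen (fun p q => SwapIToII d a χI χII p q ∨ SwapIToII d a χI χII q p)

/-- The walk `β` of length `b` avoids the walk `f` of length `m`: no vertex other than
`f 0` is visited by both. -/
def AvoidsN (d b m : ℕ) (β f : ℕ → Fin d → ℤ) : Prop :=
  ∀ i, i ≤ b → ∀ j, j ≤ m → β i = f j → f j = f 0

/-- The extension of a finitely-indexed walk to a function `ℕ → ℤ^d`. -/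
def extWalk {d m : ℕ} (γ : Fin (m + 1) → Fin d → ℤ) : ℕ → Fin d → ℤ :=
  fun i => γ ⟨min i m, by have h := min_le_right i m; omega⟩

/-- The number `T_I(γ)` of occurrences of the type I pattern in the length-`m` walk `γ`. -/
noncomputable def TIcount (d a : ℕ) (χI : ℕ → Fin d → ℤ) (m : ℕ)
    (γ : Fin (m + 1) → Fin d → ℤ) : ℕ :=
  Nat.card {k : ℕ // ∃ x, OccursAt d a χI m (extWalk γ) k x}

/-- The base `x` of a slot of the length-`L` walk `f` lying (time-wise) within the real
interval `[lo, hi]`: an occurrence of a type I or type II pattern translated by `x`. -/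
def SlotBaseIn (d a : ℕ) (χI χII : ℕ → Fin d → ℤ) (L : ℕ) (f : ℕ → Fin d → ℤ)
    (lo hi : ℝ) (x : Fin d → ℤ) : Prop :=
  ∃ k, (OccursAt d a χI L f k x ∧ lo ≤ (k : ℝ) ∧ ((k : ℝ) + a ≤ hi)) ∨
       (OccursAt d (a + 2) χII L f k x ∧ lo ≤ (k : ℝ) ∧ ((k : ℝ) + a + 2 ≤ hi))

abbrev V (d : ℕ) := Fin d → ℤ

def Adj {d : ℕ} (u v : V d) : Prop :=
  ∃ j, (u j - v j) ^ 2 = 1 ∧ ∀ k, k ≠ j → u k = v k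

lemma Adj.symm {d : ℕ} {u v : V d} (h : Adj u v) : Adj v u := by
  obtain ⟨j, h1, h2⟩ := h
  exact ⟨j, by ring_nf; ring_nf at h1; linarith [h1], fun k hk => (h2 k hk).symm⟩

lemma Adj.isNeighbor {d : ℕ} {u v : V d} (h : Adj u v) : IsNeighbor d u v := by
  obtain ⟨j, h1, h2⟩ := h
  have hs : (∑ k, ((u k : ℝ) - (v k : ℝ)) ^ 2) = 1 := by
    rw [Finset.sum_eq_single j]
    · have : ((u j - v j : ℤ) : ℝ) ^ 2 = 1 := by exact_mod_cast congrArg (fun z : ℤ => (z : ℝ)) h1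
      push_cast at this ⊢
      linarith
    · intro b _ hb
      rw [h2 b hb]; ring
    · intro hj; exact absurd (Finset.mem_univ j) hj
  rw [IsNeighbor, hs, Real.sqrt_one]

def sn {d : ℕ} (q : V d) (ℓ : ℤ) : V (d + 1) := Fin.snoc q ℓ

lemma sn_adj_layer {d : ℕ} (c : V d) {ℓ ℓ' : ℤ} (h : (ℓ - ℓ') ^ 2 = 1) :
    Adj (sn c ℓ) (sn c ℓ') := by
  refine ⟨Fin.last d, by simp [sn, h], fun k hk => ?_⟩
  obtain ⟨j, rfl⟩ := Fin.exists_castSucc_eq.2 hk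
  simp [sn]

lemma sn_adj_base {d : ℕ} {c c' : V d} (ℓ : ℤ) (h : Adj c c') : Adj (sn c ℓ) (sn c' ℓ) := by
  obtain ⟨j, h1, h2⟩ := h
  refine ⟨j.castSucc, by simpa [sn] using h1, fun k hk => ?_⟩
  rcases eq_or_ne k (Fin.last d) with rfl | hkl
  · simp [sn]
  · obtain ⟨m, rfl⟩ := Fin.exists_castSucc_eq.2 hkl
    have : m ≠ j := fun hmj => hk (by rw [hmj])
    simpa [sn] using h2 m this

def Intr {d : ℕ} (v : V d) : Prop := ∀ j, v j = 1 ∨ v j = 2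

lemma Intr.snoc {d : ℕ} {c : V d} (hc : Intr c) {ℓ : ℤ} (hℓ : ℓ = 1 ∨ ℓ = 2) :
    Intr (sn c ℓ) := by
  intro j
  rcases eq_or_ne j (Fin.last d) with rfl | hj
  · simpa [sn] using hℓ
  · obtain ⟨m, rfl⟩ := Fin.exists_castSucc_eq.2 hj
    simpa [sn] using hc m

lemma InCube.snoc {d : ℕ} {c : V d} (hc : InCube c) {ℓ : ℤ} (h0 : 0 ≤ ℓ) (h3 : ℓ ≤ 3) :
    InCube (sn c ℓ) := by
  intro j
  rcases eq_or_ne j (Fin.last d) with rfl | hj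
  · simp [sn, h0, h3]
  · obtain ⟨m, rfl⟩ := Fin.exists_castSucc_eq.2 hj
    simpa [sn] using hc m

instance {d : ℕ} (u v : V d) : Decidable (Adj u v) :=
  inferInstanceAs (Decidable (∃ j, (u j - v j) ^ 2 = 1 ∧ ∀ k, k ≠ j → u k = v k))

instance {d : ℕ} (v : V d) : Decidable (InCube v) :=
  inferInstanceAs (Decidable (∀ j, 0 ≤ v j ∧ v j ≤ 3))

instance {d : ℕ} (v : V d) : Decidable (Intr v) :=
  inferInstanceAs (Decidable (∀ j, v j = 1 ∨ v j = 2))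

noncomputable def cubeF (d : ℕ) : Finset (V d) := Fintype.piFinset (fun _ => Finset.Icc (0 : ℤ) 3)

lemma mem_cubeF {d : ℕ} {v : V d} : v ∈ cubeF d ↔ InCube v := by
  simp [cubeF, Fintype.mem_piFinset, Finset.mem_Icc, InCube]

lemma card_cubeF (d : ℕ) : (cubeF d).card = 4 ^ d := by
  simp [cubeF, Fintype.card_piFinset, Int.card_Icc]

lemma nodup_of_cover {d : ℕ} (K : List (V d)) (S : Finset (V d))
    (hsub : ∀ v ∈ K, v ∈ S) (hcov : ∀ v ∈ S, v ∈ K) (hlen : K.length = S.card) :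
    K.Nodup := by
  classical
  have h1 : K.toFinset = S := by
    apply Finset.ext
    intro v
    simp only [List.mem_toFinset]
    exact ⟨hsub v, hcov v⟩
  have h2 : K.dedup.length = S.card := by
    rw [← h1, List.card_toFinset]
  rw [← List.dedup_eq_self]
  exact (List.dedup_sublist K).eq_of_length (by omega)

def zag2 {d : ℕ} : List (V d) → List (V (d + 1))
  | a :: b :: r => sn a 3 :: sn a 2 :: sn b 2 :: sn b 3 :: zag2 r
  | _ => []

@[simp] lemma zag2_nil {d : ℕ} : zag2 ([] : List (V d)) = [] := rfl

@[simp] lemma zag2_cons₂ {d : ℕ} (a b : V d) (r : List (V d)) :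
    zag2 (a :: b :: r) = sn a 3 :: sn a 2 :: sn b 2 :: sn b 3 :: zag2 r := rfl

lemma zag2_append {d : ℕ} :
    ∀ (A : List (V d)), Even A.length → ∀ B, zag2 (A ++ B) = zag2 A ++ zag2 B
  | [], _, B => by simp
  | [a], h, B => by simp at h
  | a :: b :: A, h, B => by
    have : Even A.length := by simpa [Nat.even_add_one, parity_simps] using h
    simp [zag2_append A this B]

lemma zag2_length {d : ℕ} :
    ∀ (A : List (V d)), Even A.length → (zag2 A).length = 2 * A.length
  | [], _ => by simp
  | [a], h => by simp at h
  | a :: b :: A, h => by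
    have : Even A.length := by simpa [Nat.even_add_one, parity_simps] using h
    simp [zag2_length A this]; ring

lemma zag2_head? {d : ℕ} :
    ∀ (A : List (V d)), Even A.length → (zag2 A).head? = A.head?.map (fun c => sn c 3)
  | [], _ => by simp
  | [a], h => by simp at h
  | a :: b :: A, h => by simp

lemma even_concat2 {d : ℕ} (A : List (V d)) (hA : Even A.length) (hne : A ≠ []) :
    ∃ A' a b, A = A' ++ [a, b] ∧ Even A'.length := by
  rcases List.eq_nil_or_concat A with rfl | ⟨A₀, b, rfl⟩
  · exact absurd rfl hne
  · rcases List.eq_nil_or_concat A₀ with rfl | ⟨A₁, a, rfl⟩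
    · simp at hA
    · refine ⟨A₁, a, b, by simp, ?_⟩
      simp only [List.concat_eq_append, List.length_append, List.length_cons,
        List.length_nil] at hA ⊢
      simpa [parity_simps] using hA

lemma zag2_getLast? {d : ℕ} (A : List (V d)) (hA : Even A.length) (hne : A ≠ []) :
    (zag2 A).getLast? = A.getLast?.map (fun c => sn c 3) := by
  obtain ⟨A', a, b, rfl, hA'⟩ := even_concat2 A hA hne
  rw [zag2_append A' hA' [a, b]]
  simp [List.getLast?_append]

lemma zag2_mem {d : ℕ} :
    ∀ (A : List (V d)), Even A.length → ∀ c ∈ A, sn c 2 ∈ zag2 A ∧ sn c 3 ∈ zag2 A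
  | [], _, c, hc => by simp at hc
  | [a], h, c, hc => by simp at h
  | a :: b :: A, h, c, hc => by
    have hA : Even A.length := by simpa [Nat.even_add_one, parity_simps] using h
    rcases List.mem_cons.1 hc with rfl | hc
    · simp
    · rcases List.mem_cons.1 hc with rfl | hc
      · simp
      · have := zag2_mem A hA c hc
        simp [this.1, this.2]

lemma mem_zag2 {d : ℕ} :
    ∀ (A : List (V d)) (x : V (d+1)), x ∈ zag2 A → ∃ c ∈ A, x = sn c 2 ∨ x = sn c 3
  | [], x, hx => by simp at hx
  | [a], x, hx => by simp [zag2] at hx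
  | a :: b :: A, x, hx => by
    simp only [zag2_cons₂, List.mem_cons] at hx
    rcases hx with rfl | rfl | rfl | rfl | hx
    · exact ⟨a, by simp, Or.inr rfl⟩
    · exact ⟨a, by simp, Or.inl rfl⟩
    · exact ⟨b, by simp, Or.inl rfl⟩
    · exact ⟨b, by simp, Or.inr rfl⟩
    · obtain ⟨c, hc, h⟩ := mem_zag2 A x hx
      exact ⟨c, by simp [hc], h⟩

lemma zag2_chain' {d : ℕ} :
    ∀ (A : List (V d)), Even A.length → A.IsChain Adj → (zag2 A).IsChain Adj
  | [], _, _ => by simp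
  | [a], h, _ => by simp at h
  | a :: b :: A, h, hch => by
    have hA : Even A.length := by simpa [Nat.even_add_one, parity_simps] using h
    have hab : Adj a b := List.isChain_cons_cons.1 hch |>.1
    have hch2 : (b :: A).IsChain Adj := List.isChain_cons_cons.1 hch |>.2
    have hchA : A.IsChain Adj := hch2.tail
    rw [zag2_cons₂]
    refine List.isChain_cons_cons.2 ⟨sn_adj_layer a (by norm_num), List.isChain_cons_cons.2
      ⟨sn_adj_base 2 hab, List.isChain_cons_cons.2 ⟨sn_adj_layer b (by norm_num), ?_⟩⟩⟩
    rcases A with _ | ⟨c, A'⟩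
    · simp
    · have hbc : Adj b c := List.isChain_cons_cons.1 hch2 |>.1
      refine List.isChain_cons.2 ⟨?_, zag2_chain' (c :: A') hA hchA⟩
      intro y hy
      rw [zag2_head? (c :: A') hA] at hy
      rcases A' with _ | ⟨e, A''⟩
      · simp at hA
      · simp only [List.head?_cons, Option.map_some] at hy
        cases hy
        exact sn_adj_base 3 hbc

lemma pS_snoc {d : ℕ} (hd : 2 ≤ d) : sn (patternStart d) 1 = patternStart (d + 1) := by
  funext j
  rcases eq_or_ne j (Fin.last d) with rfl | hj
  · simp only [sn, Fin.snoc_last, patternStart, Fin.val_last]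
    rw [if_neg (by omega)]
  · obtain ⟨m, rfl⟩ := Fin.exists_castSucc_eq.2 hj
    simp only [sn, Fin.snoc_castSucc, patternStart, Fin.coe_castSucc]

lemma pE_snoc {d : ℕ} (hd : 2 ≤ d) : sn (patternEnd d) 1 = patternEnd (d + 1) := by
  funext j
  rcases eq_or_ne j (Fin.last d) with rfl | hj
  · simp only [sn, Fin.snoc_last, patternEnd, Fin.val_last]
    rw [if_neg (by omega), if_neg (by omega)]
  · obtain ⟨m, rfl⟩ := Fin.exists_castSucc_eq.2 hj
    simp only [sn, Fin.snoc_castSucc, patternEnd, Fin.coe_castSucc]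

lemma adj_pS_pE {d : ℕ} (hd : 2 ≤ d) : Adj (patternStart d) (patternEnd d) := by
  have h0 : (0 : ℕ) < d := by omega
  refine ⟨⟨0, h0⟩, by simp [patternStart, patternEnd], fun k hk => ?_⟩
  have : k.1 ≠ 0 := fun h => hk (Fin.ext h)
  simp [patternStart, patternEnd, this]

lemma boundary_ne_intr {d : ℕ} {v w : V d} (hv : OnCubeBoundary v) (hw : Intr w) :
    v ≠ w := by
  rintro rfl
  obtain ⟨-, j, hj⟩ := hv
  rcases hw j with h | h <;> omega

def listFun {d : ℕ} (K : List (V d)) : ℕ → V d := fun i => K.getD i 0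

lemma listFun_isSAWN {d m : ℕ} (K : List (V d)) (hch : K.IsChain Adj) (hnd : K.Nodup)
    (hlen : K.length = m + 1) : IsSAWN d m (listFun K) := by
  constructor
  · intro i hi
    have h1 : i < K.length := by omega
    have h2 : i + 1 < K.length := by omega
    rw [listFun, listFun, List.getD_eq_get K 0 ⟨i, h1⟩, List.getD_eq_get K 0 ⟨i + 1, h2⟩]
    have := List.isChain_iff_getElem.1 hch i (by omega)
    exact this.isNeighbor
  · intro i hi j hj hij
    simp only [Set.mem_Iic] at hi hj
    have h1 : i < K.length := by omega
    have h2 : j < K.length := by omega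
    rw [listFun, listFun, List.getD_eq_get K 0 ⟨i, h1⟩, List.getD_eq_get K 0 ⟨j, h2⟩] at hij
    simpa using congrArg Fin.val ((hnd.get_inj_iff).1 hij)

lemma listFun_head {d : ℕ} (K : List (V d)) (x : V d) (h : K.head? = some x) :
    listFun K 0 = x := by
  cases K with
  | nil => simp at h
  | cons a L => simp at h; simp [listFun, h]

lemma listFun_last {d m : ℕ} (K : List (V d)) (x : V d) (hlen : K.length = m + 1)
    (h : K.getLast? = some x) : listFun K m = x := by
  have hne : K ≠ [] := by intro hK; rw [hK] at hlen; simp at hlen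
  rw [List.getLast?_eq_getLast hne] at h
  have := List.getLast_eq_getElem hne
  rw [listFun, List.getD_eq_getElem K 0 (by omega : m < K.length)]
  rw [← Option.some_inj.1 h, this]
  congr 1
  omega

lemma listFun_mem {d : ℕ} (K : List (V d)) {i : ℕ} (h : i < K.length) :
    listFun K i ∈ K := by
  rw [listFun, List.getD_eq_get K 0 ⟨i, h⟩]
  exact List.get_mem K ⟨i, h⟩

lemma mem_listFun {d : ℕ} (K : List (V d)) {v : V d} (h : v ∈ K) :
    ∃ i, i < K.length ∧ listFun K i = v := by
  obtain ⟨n, hn⟩ := List.mem_iff_get.1 h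
  exact ⟨n.1, n.2, by rw [listFun, List.getD_eq_get K 0 n]; exact hn⟩

lemma isPatternPair_of_lists {d a : ℕ} (KI KII : List (V d))
    (c1 : KI.IsChain Adj) (n1 : KI.Nodup) (u1 : ∀ v ∈ KI, InCube v)
    (c2 : KII.IsChain Adj) (n2 : KII.Nodup) (u2 : ∀ v ∈ KII, InCube v)
    (b1 : ∀ v, OnCubeBoundary v → v ∈ KI) (b2 : ∀ v, OnCubeBoundary v → v ∈ KII)
    (l1 : KI.length = a + 1) (l2 : KII.length = a + 3)
    (h1 : KI.head? = some (patternStart d)) (g1 : KI.getLast? = some (patternEnd d))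
    (h2 : KII.head? = some (patternStart d)) (g2 : KII.getLast? = some (patternEnd d)) :
    IsPatternPair d a (listFun KI) (listFun KII) := by
  refine ⟨listFun_isSAWN KI c1 n1 l1, listFun_isSAWN KII c2 n2 (by omega), ?_, ?_, ?_, ?_,
    listFun_head _ _ h1, listFun_last _ _ l1 g1, listFun_head _ _ h2, ?_⟩
  · intro i hi; exact u1 _ (listFun_mem KI (by omega))
  · intro i hi; exact u2 _ (listFun_mem KII (by omega))
  · intro v hv
    obtain ⟨i, hi, hiv⟩ := mem_listFun KI (b1 v hv)
    exact ⟨i, by omega, hiv⟩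
  · intro v hv
    obtain ⟨i, hi, hiv⟩ := mem_listFun KII (b2 v hv)
    exact ⟨i, by omega, hiv⟩
  · exact listFun_last _ _ (by omega) g2

def GLst (d : ℕ) (x₁ q q' z z₂ r : V d) (X₂ Z₃ : List (V d)) : List (V d) :=
  patternStart d :: x₁ :: (X₂ ++ q :: q' :: z :: z₂ :: (Z₃ ++ [r, patternEnd d]))

def Good (d : ℕ) : Prop :=
  ∃ (x₁ q q' z z₂ r : V d) (X₂ Z₃ : List (V d)),
    (GLst d x₁ q q' z z₂ r X₂ Z₃).IsChain Adj ∧ (GLst d x₁ q q' z z₂ r X₂ Z₃).Nodup ∧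
    (∀ v, v ∈ GLst d x₁ q q' z z₂ r X₂ Z₃ ↔ InCube v) ∧
    (GLst d x₁ q q' z z₂ r X₂ Z₃).length = 4 ^ d ∧
    Even X₂.length ∧ Even Z₃.length ∧ Intr q ∧ Intr q'

lemma good2 : Good 2 := by
  refine ⟨![0,3], ![1,1], ![1,2], ![2,2], ![2,1], ![3,3],
    [![0,2], ![0,1], ![0,0], ![1,0]], [![2,0], ![3,0], ![3,1], ![3,2]], ?_, ?_, ?_, ?_, ?_, ?_, ?_, ?_⟩
  · unfold GLst patternStart patternEnd
    simp only [List.cons_append, List.nil_append, List.isChain_cons_cons, List.isChain_singleton,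
      and_true]
    decide
  · unfold GLst patternStart patternEnd
    decide
  · intro v
    constructor
    · intro hv
      unfold GLst patternStart patternEnd at hv
      fin_cases hv <;> decide
    · intro hv
      have h0 := hv 0
      have h1 := hv 1
      have hv2 : v = ![v 0, v 1] := by
        funext j
        fin_cases j <;> simp
      rw [hv2]
      unfold GLst patternStart patternEnd
      obtain ⟨h00, h01⟩ := h0
      obtain ⟨h10, h11⟩ := h1
      interval_cases (v 0) <;> interval_cases (v 1) <;> decide
  · decide
  · decide
  · decide
  · decide
  · decide

section Step

variable {d : ℕ} (x₁ q q' z z₂ r : V d) (X₂ Z₃ : List (V d))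

def tailL : List (V d) :=
  (x₁ :: X₂) ++ q :: q' :: (z :: z₂ :: Z₃) ++ [r, patternEnd d]

def midL : List (V d) :=
  (x₁ :: X₂) ++ q :: q' :: (z :: z₂ :: Z₃) ++ [r]

def MM : List (V d) :=
  (z :: z₂ :: Z₃).reverse ++ q' :: q :: (patternStart d :: x₁ :: X₂).reverse

def segA (d : ℕ) : List (V (d + 1)) := [sn (patternStart d) 1, sn (patternStart d) 0]

def segB : List (V (d + 1)) := (tailL x₁ q q' z z₂ r X₂ Z₃).reverse.map (fun c => sn c 0)

def segC : List (V (d + 1)) := (midL x₁ q q' z z₂ r X₂ Z₃).map (fun c => sn c 1)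

def segD : List (V (d + 1)) := sn r 2 :: sn r 3 :: zag2 (MM x₁ q q' z z₂ X₂ Z₃)

def segD' : List (V (d + 1)) :=
  sn r 2 :: sn r 3 :: (zag2 (z :: z₂ :: Z₃).reverse ++
    sn q' 3 :: sn q 3 :: zag2 (patternStart d :: x₁ :: X₂).reverse)

def segE (d : ℕ) : List (V (d + 1)) :=
  [sn (patternEnd d) 3, sn (patternEnd d) 2, sn (patternEnd d) 1]

def KII : List (V (d + 1)) :=
  segA d ++ (segB x₁ q q' z z₂ r X₂ Z₃ ++ (segC x₁ q q' z z₂ r X₂ Z₃ ++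
    (segD x₁ q q' z z₂ r X₂ Z₃ ++ segE d)))

def KI : List (V (d + 1)) :=
  segA d ++ (segB x₁ q q' z z₂ r X₂ Z₃ ++ (segC x₁ q q' z z₂ r X₂ Z₃ ++
    (segD' x₁ q q' z z₂ r X₂ Z₃ ++ segE d)))

lemma GLst_eq : GLst d x₁ q q' z z₂ r X₂ Z₃ = patternStart d :: tailL x₁ q q' z z₂ r X₂ Z₃ := by
  simp [GLst, tailL]

lemma tailL_eq_mid : tailL x₁ q q' z z₂ r X₂ Z₃ = midL x₁ q q' z z₂ r X₂ Z₃ ++ [patternEnd d] := by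
  simp [tailL, midL]

lemma MM_eq : MM x₁ q q' z z₂ X₂ Z₃ =
    ((patternStart d :: x₁ :: X₂) ++ q :: q' :: (z :: z₂ :: Z₃)).reverse := by
  simp [MM]

lemma MM_length : (MM x₁ q q' z z₂ X₂ Z₃).length = X₂.length + Z₃.length + 6 := by
  simp [MM]; omega

end Step

section Step2

variable {d : ℕ} {x₁ q q' z z₂ r : V d} {X₂ Z₃ : List (V d)}

lemma chains (hd : 2 ≤ d) (heX : Even X₂.length) (heZ : Even Z₃.length)
    (hch : (GLst d x₁ q q' z z₂ r X₂ Z₃).IsChain Adj) :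
    (KII x₁ q q' z z₂ r X₂ Z₃).IsChain Adj ∧ (KI x₁ q q' z z₂ r X₂ Z₃).IsChain Adj := by
  set s := patternStart d with hs
  set t := patternEnd d with ht
  rw [GLst_eq] at hch
  have hchT : (tailL x₁ q q' z z₂ r X₂ Z₃).IsChain Adj := hch.tail
  -- various infix pieces of L
  have hinf : ∀ l₁ l₂ : List (V d),
      (l₁ ++ l₂ = s :: tailL x₁ q q' z z₂ r X₂ Z₃) → l₂.IsChain Adj := by
    intro l₁ l₂ hl
    exact hch.infix ⟨l₁, [], by simp [hl, hs]⟩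
  have hinf2 : ∀ l₁ l₂ l₃ : List (V d),
      (l₁ ++ l₂ ++ l₃ = s :: tailL x₁ q q' z z₂ r X₂ Z₃) → l₂.IsChain Adj := by
    intro l₁ l₂ l₃ hl
    exact hch.infix ⟨l₁, l₃, by simp [← hl, ← hs]⟩
  -- prefix of L up to Zl
  have hpre : ((s :: x₁ :: X₂) ++ q :: q' :: (z :: z₂ :: Z₃)).IsChain Adj := by
    refine hch.infix ⟨[], [r, t], ?_⟩
    simp [tailL, hs, ht]
  have hZr : ((z :: z₂ :: Z₃) ++ [r]).IsChain Adj := by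
    refine hch.infix ⟨s :: x₁ :: X₂ ++ [q, q'], [t], ?_⟩
    simp [tailL, hs, ht]
  have hXq : ((s :: x₁ :: X₂) ++ [q]).IsChain Adj := by
    refine hch.infix ⟨[], q' :: (z :: z₂ :: Z₃) ++ [r, t], ?_⟩
    simp [tailL, hs, ht]
  have hqq' : Adj q q' := by
    have := hinf2 (s :: x₁ :: X₂) [q, q'] ((z :: z₂ :: Z₃) ++ [r, t]) (by simp [tailL, hs, ht])
    simpa using this
  have hq'z : Adj q' z := by
    have := hinf2 (s :: x₁ :: X₂ ++ [q]) [q', z] (z₂ :: Z₃ ++ [r, t]) (by simp [tailL, hs, ht])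
    simpa using this
  have hst : Adj s t := adj_pS_pE hd
  -- flipped chains for reversed lists
  have hflip : ∀ (l : List (V d)), l.IsChain Adj → l.reverse.IsChain Adj := by
    intro l hl
    rw [List.isChain_reverse]
    exact hl.imp (fun a b hab => hab.symm)
  -- chain conditions for segments
  have cA : (segA d).IsChain Adj := by
    refine List.isChain_pair.2 ?_
    exact sn_adj_layer _ (by norm_num)
  have cB : (segB x₁ q q' z z₂ r X₂ Z₃).IsChain Adj := by
    rw [segB, List.isChain_map]
    exact (hflip _ hchT).imp (fun a b hab => sn_adj_base 0 hab)
  have cC : (segC x₁ q q' z z₂ r X₂ Z₃).IsChain Adj := by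
    rw [segC, List.isChain_map]
    have : (midL x₁ q q' z z₂ r X₂ Z₃).IsChain Adj := by
      refine hchT.infix ⟨[], [t], ?_⟩
      simp [tailL_eq_mid, ht]
    exact this.imp (fun a b hab => sn_adj_base 1 hab)
  have hMeven : Even (MM x₁ q q' z z₂ X₂ Z₃).length := by
    rw [MM_length]
    rcases heX with ⟨a, ha⟩; rcases heZ with ⟨b, hb⟩
    exact ⟨a + b + 3, by omega⟩
  have cZM : (zag2 (MM x₁ q q' z z₂ X₂ Z₃)).IsChain Adj := by
    refine zag2_chain' _ hMeven ?_
    rw [MM_eq]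
    exact hflip _ hpre
  -- head?/getLast? facts
  have hBhead : (segB x₁ q q' z z₂ r X₂ Z₃).head? = some (sn t 0) := by
    rw [segB, List.head?_map, List.head?_reverse, tailL_eq_mid, List.getLast?_append]
    simp [ht]
  have hBlast : (segB x₁ q q' z z₂ r X₂ Z₃).getLast? = some (sn x₁ 0) := by
    rw [segB, List.getLast?_map, List.getLast?_reverse]
    simp [tailL, hs, ht]
  have hChead : (segC x₁ q q' z z₂ r X₂ Z₃).head? = some (sn x₁ 1) := by
    simp [segC, midL]
  have hmidlast : (midL x₁ q q' z z₂ r X₂ Z₃).getLast? = some r := by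
    rw [show midL x₁ q q' z z₂ r X₂ Z₃
      = ((x₁ :: X₂) ++ q :: q' :: (z :: z₂ :: Z₃)) ++ [r] from by simp [midL],
      List.getLast?_concat]
  have hClast : (segC x₁ q q' z z₂ r X₂ Z₃).getLast? = some (sn r 1) := by
    rw [segC, List.getLast?_map, hmidlast]
    rfl
  have hZlrevne : (z :: z₂ :: Z₃).reverse ≠ [] := by simp
  have hZleven : Even (z :: z₂ :: Z₃).reverse.length := by
    rcases heZ with ⟨b, hb⟩
    exact ⟨b + 1, by simp [hb]; omega⟩
  have hXleven : Even (s :: x₁ :: X₂).reverse.length := by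
    rcases heX with ⟨a, ha⟩
    exact ⟨a + 1, by simp [ha]; omega⟩
  have hZlastAdj : Adj ((z :: z₂ :: Z₃).getLast (by simp)) r := by
    refine (List.isChain_append.1 hZr).2.2 _ ?_ r (by simp)
    rw [List.getLast?_eq_getLast (l := z :: z₂ :: Z₃) (by simp)]
    rfl
  have hMMhead : (MM x₁ q q' z z₂ X₂ Z₃).head? = (z :: z₂ :: Z₃).getLast? := by
    rw [MM, List.head?_append, List.head?_reverse,
      List.getLast?_eq_getLast (l := z :: z₂ :: Z₃) (by simp)]
    rfl
  have jr3M : ∀ y ∈ (zag2 (MM x₁ q q' z z₂ X₂ Z₃)).head?, Adj (sn r 3) y := by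
    intro y hy
    rw [zag2_head? _ hMeven, hMMhead,
      List.getLast?_eq_getLast (l := z :: z₂ :: Z₃) (by simp)] at hy
    simp only [Option.map_some, Option.mem_def, Option.some.injEq] at hy
    subst hy
    exact (sn_adj_base 3 hZlastAdj).symm
  have jr3Z : ∀ y ∈ (zag2 (z :: z₂ :: Z₃).reverse).head?, Adj (sn r 3) y := by
    intro y hy
    rw [zag2_head? _ hZleven, List.head?_reverse,
      List.getLast?_eq_getLast (l := z :: z₂ :: Z₃) (by simp)] at hy
    simp only [Option.map_some, Option.mem_def, Option.some.injEq] at hy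
    subst hy
    exact (sn_adj_base 3 hZlastAdj).symm
  have hXlastAdj : Adj ((s :: x₁ :: X₂).getLast (by simp)) q := by
    refine (List.isChain_append.1 hXq).2.2 _ ?_ q (by simp)
    rw [List.getLast?_eq_getLast (l := s :: x₁ :: X₂) (by simp)]
    rfl
  have jq3 : ∀ y ∈ (zag2 (s :: x₁ :: X₂).reverse).head?, Adj (sn q 3) y := by
    intro y hy
    rw [zag2_head? _ hXleven, List.head?_reverse,
      List.getLast?_eq_getLast (l := s :: x₁ :: X₂) (by simp)] at hy
    simp only [Option.map_some, Option.mem_def, Option.some.injEq] at hy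
    subst hy
    exact (sn_adj_base 3 hXlastAdj.symm)
  have cZrev : (zag2 (z :: z₂ :: Z₃).reverse).IsChain Adj := by
    refine zag2_chain' _ hZleven (hflip _ ?_)
    exact hinf2 (s :: x₁ :: X₂ ++ [q, q']) (z :: z₂ :: Z₃) [r, t] (by simp [tailL, hs, ht])
  have cXrev : (zag2 (s :: x₁ :: X₂).reverse).IsChain Adj := by
    refine zag2_chain' _ hXleven (hflip _ ?_)
    exact hinf2 [] (s :: x₁ :: X₂) (q :: q' :: (z :: z₂ :: Z₃) ++ [r, t]) (by simp [tailL, hs, ht])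
  have cD : (segD x₁ q q' z z₂ r X₂ Z₃).IsChain Adj := by
    rw [segD]
    refine List.isChain_cons_cons.2 ⟨sn_adj_layer _ (by norm_num), List.isChain_cons.2 ⟨jr3M, cZM⟩⟩
  have cD' : (segD' x₁ q q' z z₂ r X₂ Z₃).IsChain Adj := by
    rw [segD']
    refine List.isChain_cons_cons.2 ⟨sn_adj_layer _ (by norm_num), List.isChain_cons.2 ⟨?_, ?_⟩⟩
    · intro y hy
      rw [List.head?_append] at hy
      rcases Option.or_eq_some_iff.1 (Option.mem_def.1 hy) with h | ⟨h1, h2⟩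
      · exact jr3Z y (Option.mem_def.2 h)
      · have : (zag2 (z :: z₂ :: Z₃).reverse).length = 2 * (z :: z₂ :: Z₃).reverse.length :=
          zag2_length _ hZleven
        rw [List.head?_eq_none_iff] at h1
        rw [h1] at this
        simp at this
    · refine List.isChain_append.2 ⟨cZrev, ?_, ?_⟩
      · refine List.isChain_cons_cons.2 ⟨sn_adj_base 3 hqq'.symm, List.isChain_cons.2 ⟨jq3, cXrev⟩⟩
      · intro x hx y hy
        rw [zag2_getLast? _ hZleven hZlrevne, List.getLast?_reverse] at hx
        simp only [List.head?_cons, Option.mem_def, Option.some.injEq] at hx hy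
        simp only [Option.map_eq_some_iff] at hx
        obtain ⟨w, hw, rfl⟩ := hx
        simp only [List.head?_cons, Option.some.injEq] at hw
        subst hw; subst hy
        exact sn_adj_base 3 hq'z.symm
  have cE : (segE d).IsChain Adj := by
    refine List.isChain_cons_cons.2 ⟨sn_adj_layer _ (by norm_num), List.isChain_pair.2 ?_⟩
    exact sn_adj_layer _ (by norm_num)
  -- last of segD and segD'
  have hrevXlast : (patternStart d :: x₁ :: X₂).reverse.getLast? = some s := by
    rw [List.getLast?_reverse]; rfl
  have hMMlast : (MM x₁ q q' z z₂ X₂ Z₃).getLast? = some s := by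
    rw [MM, List.getLast?_append,
      show (q' :: q :: (patternStart d :: x₁ :: X₂).reverse : List (V d))
        = [q', q] ++ (patternStart d :: x₁ :: X₂).reverse from rfl,
      List.getLast?_append, hrevXlast]
    rfl
  have hDlast : (segD x₁ q q' z z₂ r X₂ Z₃).getLast? = some (sn s 3) := by
    have h1 : (zag2 (MM x₁ q q' z z₂ X₂ Z₃)).getLast? = some (sn s 3) := by
      rw [zag2_getLast? _ hMeven (by rw [← List.length_pos_iff_ne_nil, MM_length]; omega),
        hMMlast]
      rfl
    rw [segD, show (sn r 2 :: sn r 3 :: zag2 (MM x₁ q q' z z₂ X₂ Z₃) : List (V (d+1)))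
      = [sn r 2, sn r 3] ++ zag2 (MM x₁ q q' z z₂ X₂ Z₃) from rfl, List.getLast?_append, h1]
    rfl
  have hD'last : (segD' x₁ q q' z z₂ r X₂ Z₃).getLast? = some (sn s 3) := by
    have h1 : (zag2 (s :: x₁ :: X₂).reverse).getLast? = some (sn s 3) := by
      rw [zag2_getLast? _ hXleven (by simp), hrevXlast]
      rfl
    rw [segD', show (sn r 2 :: sn r 3 :: (zag2 (z :: z₂ :: Z₃).reverse ++
        sn q' 3 :: sn q 3 :: zag2 (s :: x₁ :: X₂).reverse) : List (V (d+1)))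
      = ([sn r 2, sn r 3] ++ zag2 (z :: z₂ :: Z₃).reverse ++ [sn q' 3, sn q 3]) ++
        zag2 (s :: x₁ :: X₂).reverse from by simp, List.getLast?_append, h1]
    rfl
  -- assembly
  have hAlast : (segA d).getLast? = some (sn s 0) := rfl
  constructor
  · rw [KII]
    refine List.isChain_append.2 ⟨cA, List.isChain_append.2 ⟨cB, List.isChain_append.2
      ⟨cC, List.isChain_append.2 ⟨cD, cE, ?_⟩, ?_⟩, ?_⟩, ?_⟩
    · intro x hx y hy
      rw [hDlast] at hx
      simp only [segE, List.head?_cons, Option.mem_def, Option.some.injEq] at hx hy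
      subst hx; subst hy
      exact sn_adj_base 3 hst
    · intro x hx y hy
      rw [hClast] at hx
      rw [List.head?_append, segD, List.head?_cons] at hy
      simp only [Option.mem_def, Option.some.injEq, Option.some_or] at hx hy
      subst hx; subst hy
      exact sn_adj_layer _ (by norm_num)
    · intro x hx y hy
      rw [hBlast] at hx
      rw [List.head?_append, hChead] at hy
      simp only [Option.mem_def, Option.some.injEq, Option.some_or] at hx hy
      subst hx; subst hy
      exact sn_adj_layer _ (by norm_num)
    · intro x hx y hy
      rw [hAlast] at hx
      rw [List.head?_append, hBhead] at hy
      simp only [Option.mem_def, Option.some.injEq, Option.some_or] at hx hy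
      subst hx; subst hy
      exact sn_adj_base 0 hst
  · rw [KI]
    refine List.isChain_append.2 ⟨cA, List.isChain_append.2 ⟨cB, List.isChain_append.2
      ⟨cC, List.isChain_append.2 ⟨cD', cE, ?_⟩, ?_⟩, ?_⟩, ?_⟩
    · intro x hx y hy
      rw [hD'last] at hx
      simp only [segE, List.head?_cons, Option.mem_def, Option.some.injEq] at hx hy
      subst hx; subst hy
      exact sn_adj_base 3 hst
    · intro x hx y hy
      rw [hClast] at hx
      rw [List.head?_append, segD', List.head?_cons] at hy
      simp only [Option.mem_def, Option.some.injEq, Option.some_or] at hx hy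
      subst hx; subst hy
      exact sn_adj_layer _ (by norm_num)
    · intro x hx y hy
      rw [hBlast] at hx
      rw [List.head?_append, hChead] at hy
      simp only [Option.mem_def, Option.some.injEq, Option.some_or] at hx hy
      subst hx; subst hy
      exact sn_adj_layer _ (by norm_num)
    · intro x hx y hy
      rw [hAlast] at hx
      rw [List.head?_append, hBhead] at hy
      simp only [Option.mem_def, Option.some.injEq, Option.some_or] at hx hy
      subst hx; subst hy
      exact sn_adj_base 0 hst

lemma cover_KII (hd : 2 ≤ d) (heX : Even X₂.length) (heZ : Even Z₃.length)
    (hcov : ∀ v, v ∈ GLst d x₁ q q' z z₂ r X₂ Z₃ ↔ InCube v) :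
    ∀ v, v ∈ KII x₁ q q' z z₂ r X₂ Z₃ ↔ InCube v := by
  have hLmem : ∀ c, c ∈ patternStart d :: tailL x₁ q q' z z₂ r X₂ Z₃ ↔ InCube c := by
    intro c
    rw [← GLst_eq]
    exact hcov c
  have hMeven : Even (MM x₁ q q' z z₂ X₂ Z₃).length := by
    rw [MM_length]
    rcases heX with ⟨a, ha⟩; rcases heZ with ⟨b, hb⟩
    exact ⟨a + b + 3, by omega⟩
  have hMsub : ∀ c ∈ MM x₁ q q' z z₂ X₂ Z₃, c ∈ patternStart d :: tailL x₁ q q' z z₂ r X₂ Z₃ := by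
    intro c hc
    simp only [MM, tailL, List.mem_append, List.mem_cons, List.mem_reverse] at hc ⊢
    tauto
  have hsplit2 : ∀ c, c ∈ patternStart d :: tailL x₁ q q' z z₂ r X₂ Z₃ →
      c = r ∨ c = patternEnd d ∨ c ∈ MM x₁ q q' z z₂ X₂ Z₃ := by
    intro c hc
    simp only [MM, tailL, List.mem_append, List.mem_cons, List.mem_reverse] at hc ⊢
    tauto
  have hmid : ∀ c ∈ midL x₁ q q' z z₂ r X₂ Z₃, c ∈ tailL x₁ q q' z z₂ r X₂ Z₃ := by
    intro c hc
    rw [tailL_eq_mid]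
    exact List.mem_append_left _ hc
  have key : ∀ c ∈ patternStart d :: tailL x₁ q q' z z₂ r X₂ Z₃, ∀ ℓ : ℤ, 0 ≤ ℓ → ℓ ≤ 3 →
      InCube (sn c ℓ) := by
    intro c hc ℓ h0 h3
    exact InCube.snoc ((hLmem c).1 hc) h0 h3
  intro v
  constructor
  · intro hv
    simp only [KII, List.mem_append] at hv
    rcases hv with hv | hv | hv | hv | hv
    · rcases (by simpa [segA] using hv : v = sn (patternStart d) 1 ∨ v = sn (patternStart d) 0)
        with rfl | rfl
      · exact key _ (by simp) 1 (by norm_num) (by norm_num)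
      · exact key _ (by simp) 0 (by norm_num) (by norm_num)
    · obtain ⟨c, hc, rfl⟩ : ∃ c ∈ tailL x₁ q q' z z₂ r X₂ Z₃, sn c 0 = v := by
        simpa [segB] using hv
      exact key c (by simp [hc]) 0 (by norm_num) (by norm_num)
    · obtain ⟨c, hc, rfl⟩ : ∃ c ∈ midL x₁ q q' z z₂ r X₂ Z₃, sn c 1 = v := by
        simpa [segC] using hv
      exact key c (by simp [hmid c hc]) 1 (by norm_num) (by norm_num)
    · rw [segD] at hv
      rcases List.mem_cons.1 hv with rfl | hv
      · exact key r (by simp [tailL]) 2 (by norm_num) (by norm_num)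
      · rcases List.mem_cons.1 hv with rfl | hv
        · exact key r (by simp [tailL]) 3 (by norm_num) (by norm_num)
        · obtain ⟨c, hc, rfl | rfl⟩ := mem_zag2 _ _ hv
          · exact key c (hMsub c hc) 2 (by norm_num) (by norm_num)
          · exact key c (hMsub c hc) 3 (by norm_num) (by norm_num)
    · rcases (by simpa [segE] using hv :
          v = sn (patternEnd d) 3 ∨ v = sn (patternEnd d) 2 ∨ v = sn (patternEnd d) 1)
        with rfl | rfl | rfl
      · exact key _ (by simp [tailL]) 3 (by norm_num) (by norm_num)
      · exact key _ (by simp [tailL]) 2 (by norm_num) (by norm_num)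
      · exact key _ (by simp [tailL]) 1 (by norm_num) (by norm_num)
  · intro hv
    have hveq : sn (Fin.init v) (v (Fin.last d)) = v := Fin.snoc_init_self v
    have hc : InCube (Fin.init v) := by
      intro j
      simpa [Fin.init] using hv j.castSucc
    have hcL : Fin.init v ∈ patternStart d :: tailL x₁ q q' z z₂ r X₂ Z₃ := (hLmem _).2 hc
    obtain ⟨h0, h3⟩ := hv (Fin.last d)
    rw [← hveq]
    have hcT : Fin.init v = patternStart d ∨ Fin.init v ∈ tailL x₁ q q' z z₂ r X₂ Z₃ := by
      simpa using hcL
    interval_cases hl : (v (Fin.last d))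
    · rcases hcT with hc1 | hcT
      · rw [hc1]; simp [KII, segA]
      · simp only [KII, segB, List.mem_append, List.mem_cons, List.mem_map, List.mem_reverse]
        exact Or.inr (Or.inl ⟨_, hcT, rfl⟩)
    · rcases hcT with hc1 | hcT
      · rw [hc1]; simp [KII, segA]
      · rw [tailL_eq_mid] at hcT
        rcases List.mem_append.1 hcT with hcT | hcT
        · simp only [KII, segC, List.mem_append, List.mem_cons, List.mem_map]
          exact Or.inr (Or.inr (Or.inl ⟨_, hcT, rfl⟩))
        · rw [List.mem_singleton.1 hcT]
          simp [KII, segE]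
    · rcases hsplit2 _ hcL with hc1 | hc1 | hcM
      · rw [hc1]; simp [KII, segD]
      · rw [hc1]; simp [KII, segE]
      · have := (zag2_mem _ hMeven _ hcM).1
        simp only [KII, segD, List.mem_append, List.mem_cons]
        tauto
    · rcases hsplit2 _ hcL with hc1 | hc1 | hcM
      · rw [hc1]; simp [KII, segD]
      · rw [hc1]; simp [KII, segE]
      · have := (zag2_mem _ hMeven _ hcM).2
        simp only [KII, segD, List.mem_append, List.mem_cons]
        tauto

lemma GLst_length : (GLst d x₁ q q' z z₂ r X₂ Z₃).length = X₂.length + Z₃.length + 8 := by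
  simp [GLst]
  omega

lemma KII_length (heX : Even X₂.length) (heZ : Even Z₃.length) :
    (KII x₁ q q' z z₂ r X₂ Z₃).length = 4 * (X₂.length + Z₃.length + 8) := by
  have hMeven : Even (MM x₁ q q' z z₂ X₂ Z₃).length := by
    rw [MM_length]
    rcases heX with ⟨a, ha⟩; rcases heZ with ⟨b, hb⟩
    exact ⟨a + b + 3, by omega⟩
  simp [KII, segA, segB, segC, segD, segE, zag2_length _ hMeven, MM_length, tailL, midL]
  omega

lemma KI_length (heX : Even X₂.length) (heZ : Even Z₃.length) :
    (KI x₁ q q' z z₂ r X₂ Z₃).length = 4 * (X₂.length + Z₃.length + 8) - 2 := by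
  have h1 : (zag2 (Z₃.reverse ++ [z₂, z])).length = 2 * (Z₃.length + 2) := by
    rw [zag2_length _ (by rcases heZ with ⟨b, hb⟩; exact ⟨b + 1, by simp [hb]; omega⟩)]
    simp
  have h2 : (zag2 (X₂.reverse ++ [x₁, patternStart d])).length = 2 * (X₂.length + 2) := by
    rw [zag2_length _ (by rcases heX with ⟨a, ha⟩; exact ⟨a + 1, by simp [ha]; omega⟩)]
    simp
  simp [KI, segA, segB, segC, segD', segE, tailL, midL, h1, h2]
  omega

lemma zag2_MM_split (heZ : Even Z₃.length) :
    zag2 (MM x₁ q q' z z₂ X₂ Z₃) = zag2 (z :: z₂ :: Z₃).reverse ++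
      sn q' 3 :: sn q' 2 :: sn q 2 :: sn q 3 :: zag2 (patternStart d :: x₁ :: X₂).reverse := by
  have hZleven : Even (z :: z₂ :: Z₃).reverse.length := by
    rcases heZ with ⟨b, hb⟩
    exact ⟨b + 1, by simp [hb]; omega⟩
  rw [MM, zag2_append _ hZleven]
  rfl

lemma KI_sublist (heZ : Even Z₃.length) :
    List.Sublist (KI x₁ q q' z z₂ r X₂ Z₃) (KII x₁ q q' z z₂ r X₂ Z₃) := by
  rw [KI, KII]
  refine (List.Sublist.refl _).append ((List.Sublist.refl _).append
    ((List.Sublist.refl _).append (List.Sublist.append ?_ (List.Sublist.refl _))))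
  rw [segD, segD', zag2_MM_split heZ]
  refine List.Sublist.cons₂ _ (List.Sublist.cons₂ _ (List.Sublist.append
    (List.Sublist.refl _) ?_))
  exact List.Sublist.cons₂ _ (List.Sublist.cons _ (List.Sublist.cons _ (List.Sublist.refl _)))

lemma mem_KI_of (heZ : Even Z₃.length) :
    ∀ w ∈ KII x₁ q q' z z₂ r X₂ Z₃, w ∈ KI x₁ q q' z z₂ r X₂ Z₃ ∨
      w = sn q' 2 ∨ w = sn q 2 := by
  intro w hw
  rw [KII, segD, zag2_MM_split heZ] at hw
  rw [KI, segD']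
  simp only [List.mem_append, List.mem_cons] at hw ⊢
  tauto

lemma KII_head : (KII x₁ q q' z z₂ r X₂ Z₃).head? = some (sn (patternStart d) 1) := rfl

lemma KI_head : (KI x₁ q q' z z₂ r X₂ Z₃).head? = some (sn (patternStart d) 1) := rfl

lemma KII_last : (KII x₁ q q' z z₂ r X₂ Z₃).getLast? = some (sn (patternEnd d) 1) := by
  rw [KII, List.getLast?_append, List.getLast?_append, List.getLast?_append,
    List.getLast?_append]
  rfl

lemma KI_last : (KI x₁ q q' z z₂ r X₂ Z₃).getLast? = some (sn (patternEnd d) 1) := by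
  rw [KI, List.getLast?_append, List.getLast?_append, List.getLast?_append,
    List.getLast?_append]
  rfl

lemma GLst_succ_eq (hd : 2 ≤ d) :
    GLst (d+1) (sn (patternStart d) 0) (sn q 1) (sn q' 1) (sn z 1) (sn z₂ 1)
      (sn (patternEnd d) 2)
      (segB x₁ q q' z z₂ r X₂ Z₃ ++ (x₁ :: X₂).map (fun c => sn c 1))
      ((Z₃ ++ [r]).map (fun c => sn c 1) ++ segD x₁ q q' z z₂ r X₂ Z₃ ++ [sn (patternEnd d) 3])
    = KII x₁ q q' z z₂ r X₂ Z₃ := by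
  rw [GLst, KII, ← pS_snoc hd, ← pE_snoc hd]
  simp [segA, segC, segE, midL, List.map_append]


lemma good_step {d : ℕ} (hd : 2 ≤ d) (h : Good d) :
    Good (d + 1) ∧ ∃ a χI χII, IsPatternPair (d + 1) a χI χII := by
  obtain ⟨x₁, q, q', z, z₂, r, X₂, Z₃, hch, hnd, hcov, hlen, heX, heZ, hq, hq'⟩ := h
  obtain ⟨cII, cI⟩ := chains hd heX heZ hch
  have hcovII := cover_KII hd heX heZ hcov
  have h8 : X₂.length + Z₃.length + 8 = 4 ^ d := by
    rw [← hlen, GLst_length]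
  have hpow : 4 ^ (d + 1) = 4 * (4 ^ d) := by rw [pow_succ]; ring
  have h16 : 16 ≤ 4 ^ d := by
    calc (16 : ℕ) = 4 ^ 2 := by norm_num
    _ ≤ 4 ^ d := Nat.pow_le_pow_right (by norm_num) hd
  have hlenII : (KII x₁ q q' z z₂ r X₂ Z₃).length = 4 ^ (d + 1) := by
    rw [KII_length heX heZ, h8, hpow]
  have hlenI : (KI x₁ q q' z z₂ r X₂ Z₃).length = 4 ^ (d + 1) - 2 := by
    rw [KI_length heX heZ, h8, hpow]
  have hndII : (KII x₁ q q' z z₂ r X₂ Z₃).Nodup :=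
    nodup_of_cover _ (cubeF (d + 1))
      (fun v hv => mem_cubeF.2 ((hcovII v).1 hv))
      (fun v hv => (hcovII v).2 (mem_cubeF.1 hv))
      (by rw [hlenII, card_cubeF])
  have hndI : (KI x₁ q q' z z₂ r X₂ Z₃).Nodup :=
    List.Nodup.sublist (KI_sublist heZ) hndII
  have hMeven : Even (MM x₁ q q' z z₂ X₂ Z₃).length := by
    rw [MM_length]
    rcases heX with ⟨a, ha⟩; rcases heZ with ⟨b, hb⟩
    exact ⟨a + b + 3, by omega⟩
  obtain ⟨aX, haX⟩ := id heX
  obtain ⟨bZ, hbZ⟩ := id heZ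
  constructor
  · refine ⟨sn (patternStart d) 0, sn q 1, sn q' 1, sn z 1, sn z₂ 1, sn (patternEnd d) 2,
      segB x₁ q q' z z₂ r X₂ Z₃ ++ (x₁ :: X₂).map (fun c => sn c 1),
      (Z₃ ++ [r]).map (fun c => sn c 1) ++ segD x₁ q q' z z₂ r X₂ Z₃ ++
        [sn (patternEnd d) 3], ?_, ?_, ?_, ?_, ?_, ?_, ?_, ?_⟩
    · rw [GLst_succ_eq hd]; exact cII
    · rw [GLst_succ_eq hd]; exact hndII
    · rw [GLst_succ_eq hd]; exact hcovII
    · rw [GLst_succ_eq hd]; exact hlenII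
    · have hl : (segB x₁ q q' z z₂ r X₂ Z₃ ++ (x₁ :: X₂).map (fun c => sn c 1)).length
          = 2 * X₂.length + Z₃.length + 8 := by
        simp [segB, tailL]
        omega
      rw [hl]
      exact ⟨X₂.length + bZ + 4, by omega⟩
    · have hsegD : (segD x₁ q q' z z₂ r X₂ Z₃).length
          = 2 * (X₂.length + Z₃.length + 6) + 2 := by
        simp [segD, zag2_length _ hMeven, MM_length]
      have hl : ((Z₃ ++ [r]).map (fun c => sn c 1) ++ segD x₁ q q' z z₂ r X₂ Z₃ ++
          [sn (patternEnd d) 3]).length = 2 * X₂.length + 3 * Z₃.length + 16 := by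
        simp [hsegD]
        omega
      rw [hl]
      exact ⟨X₂.length + 3 * bZ + 8, by omega⟩
    · exact hq.snoc (Or.inl rfl)
    · exact hq'.snoc (Or.inl rfl)
  · refine ⟨4 ^ (d + 1) - 3, listFun (KI x₁ q q' z z₂ r X₂ Z₃),
      listFun (KII x₁ q q' z z₂ r X₂ Z₃),
      isPatternPair_of_lists _ _ cI hndI ?_ cII hndII
        (fun v hv => (hcovII v).1 hv) ?_ (fun v hv => (hcovII v).2 hv.1) ?_ ?_
        (by rw [KI_head, pS_snoc hd]) (by rw [KI_last, pE_snoc hd])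
        (by rw [KII_head, pS_snoc hd]) (by rw [KII_last, pE_snoc hd])⟩
    · exact fun v hv => (hcovII v).1 ((KI_sublist heZ).subset hv)
    · intro v hv
      have hvII : v ∈ KII x₁ q q' z z₂ r X₂ Z₃ := (hcovII v).2 hv.1
      rcases mem_KI_of heZ v hvII with h | h | h
      · exact h
      · exact absurd h (boundary_ne_intr hv (hq'.snoc (Or.inr rfl)))
      · exact absurd h (boundary_ne_intr hv (hq.snoc (Or.inr rfl)))
    · rw [hlenI]; omega
    · rw [hlenII]; omega

end Step2

lemma good_all : ∀ d, 2 ≤ d → Good d := by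
  intro d hd
  induction d, hd using Nat.le_induction with
  | base => exact good2
  | succ n hn ih => exact (good_step hn ih).1

def KII2 : List (V 2) :=
  [patternStart 2, ![0,3], ![0,2], ![0,1], ![0,0], ![1,0], ![1,1], ![1,2],
   ![2,2], ![2,1], ![2,0], ![3,0], ![3,1], ![3,2], ![3,3], patternEnd 2]

def KI2 : List (V 2) :=
  [patternStart 2, ![0,3], ![0,2], ![0,1], ![0,0], ![1,0], ![1,1],
   ![2,1], ![2,0], ![3,0], ![3,1], ![3,2], ![3,3], patternEnd 2]

lemma inCube_mem_KII2 : ∀ v : V 2, InCube v → v ∈ KII2 := by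
  intro v hv
  have h0 := hv 0
  have h1 := hv 1
  have hv2 : v = ![v 0, v 1] := by
    funext j
    fin_cases j <;> simp
  rw [hv2]
  unfold KII2 patternStart patternEnd
  obtain ⟨h00, h01⟩ := h0
  obtain ⟨h10, h11⟩ := h1
  interval_cases (v 0) <;> interval_cases (v 1) <;> decide

lemma pattern2 : ∃ a χI χII, IsPatternPair 2 a χI χII := by
  have hsub : ∀ w ∈ KII2, w ∈ KI2 ∨ w = ![1,2] ∨ w = ![2,2] := by
    unfold KII2 KI2 patternStart patternEnd
    decide
  have hbd : ∀ v : V 2, OnCubeBoundary v → v ∈ KI2 := by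
    intro v hv
    rcases hsub v (inCube_mem_KII2 v hv.1) with h | h | h
    · exact h
    · exact absurd h (boundary_ne_intr hv (by decide))
    · exact absurd h (boundary_ne_intr hv (by decide))
  refine ⟨13, listFun KI2, listFun KII2,
    isPatternPair_of_lists _ _ ?_ ?_ ?_ ?_ ?_ ?_ (fun v hv => hbd v hv)
      (fun v hv => inCube_mem_KII2 v hv.1) (by decide) (by decide) rfl ?_ rfl ?_⟩
  · unfold KI2 patternStart patternEnd
    simp only [List.isChain_cons_cons, List.isChain_singleton, and_true]
    decide
  · unfold KI2 patternStart patternEnd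
    decide
  · intro v hv
    unfold KI2 patternStart patternEnd at hv
    fin_cases hv <;> decide
  · unfold KII2 patternStart patternEnd
    simp only [List.isChain_cons_cons, List.isChain_singleton, and_true]
    decide
  · unfold KII2 patternStart patternEnd
    decide
  · intro v hv
    unfold KII2 patternStart patternEnd at hv
    fin_cases hv <;> decide
  · rfl
  · rfl

theorem pattern_pair_exists' (d : ℕ) (hd : 2 ≤ d) :
    ∃ a χI χII, IsPatternPair d a χI χII := by
  rcases eq_or_lt_of_le hd with h | h
  · rw [← h]
    exact pattern2
  · obtain ⟨e, rfl⟩ : ∃ e, d = e + 1 := ⟨d - 1, by omega⟩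
    have he : 2 ≤ e := by omega
    exact (good_step he (good_all e he)).2

/-- for every `d ≥ 2` there exists a pair of type I and type II patterns. -/
theorem pattern_pair_exists (d : ℕ) (hd : 2 ≤ d) :
    ∃ (a : ℕ) (χI χII : ℕ → Fin d → ℤ), IsPatternPair d a χI χII :=
  pattern_pair_exists' d hd
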